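/- arXiv:1907.05406 — 5 statements merged into one kernel-verified Lean document; each statement's English description precedes it below -/
import Mathlib

section
/- The graph C_{4m} (a cycle on 4m vertices, m ≥ 1) admits a graceful labelling, i.e. an injective vertex labelling f : V(C_{4m}) → {0,1,...,4m} such that the induced edge labels |f(x)−f(y)| over all edges xy are exactly {1,2,...,4m}. -/
/-- auxiliary labelling function -/
def ggLabel (m k : ℕ) : ℕ :=
  if k % 2 = 0 then k / 2
  else if k < 2 * m then 4 * m - k / 2
  else 4 * m - k / 2 - 1

lemma ggLabel_le (m k : ℕ) (hk : k < 4 * m) : ggLabel m k ≤ 4 * m := by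
  unfold ggLabel; split_ifs <;> omega

lemma ggLabel_inj (m : ℕ) (hm : 1 ≤ m) {k l : ℕ} (hk : k < 4 * m) (hl : l < 4 * m)
    (h : ggLabel m k = ggLabel m l) : k = l := by
  unfold ggLabel at h; split_ifs at h <;> omega

/-- edge-label function -/
def eeLabel (m k : ℕ) : ℕ :=
  if k < 2 * m then 4 * m - k
  else if k + 1 < 4 * m then 4 * m - 1 - k
  else 2 * m

lemma ggLabel_diff (m : ℕ) (hm : 1 ≤ m) {k : ℕ} (hk : k < 4 * m) :
    ((ggLabel m k : ℤ) - (ggLabel m ((k + 1) % (4 * m)) : ℤ)).natAbs = eeLabel m k := by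
  rcases Nat.lt_or_ge (k + 1) (4 * m) with h | h
  · rw [Nat.mod_eq_of_lt h]
    unfold ggLabel eeLabel
    split_ifs <;> omega
  · have hk1 : k = 4 * m - 1 := by omega
    have hk2 : k + 1 = 4 * m := by omega
    rw [hk2, Nat.mod_self]
    unfold ggLabel eeLabel
    split_ifs <;> omega

/-- The cycle C_{4m} (vertices `ZMod (4m)`, edges `{i, i+1}`) admits a
graceful labelling: an injective vertex labelling into `{0,…,4m}` whose induced edge
labels `|f i − f (i+1)|` form exactly `{1,…,4m}`. -/
theorem cycle_4m_graceful (m : ℕ) (hm : 1 ≤ m) :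
    ∃ f : ZMod (4 * m) → ℕ,
      (∀ i, f i ≤ 4 * m) ∧
      Function.Injective f ∧
      Function.Injective (fun i : ZMod (4 * m) => ((f i : ℤ) - (f (i + 1) : ℤ)).natAbs) ∧
      Set.range (fun i : ZMod (4 * m) => ((f i : ℤ) - (f (i + 1) : ℤ)).natAbs)
        = Set.Icc 1 (4 * m) := by
  haveI : NeZero (4 * m) := ⟨by omega⟩
  haveI : Fact (1 < 4 * m) := ⟨by omega⟩
  refine ⟨fun i => ggLabel m i.val, ?_, ?_, ?_, ?_⟩
  · intro i; exact ggLabel_le m _ (ZMod.val_lt i)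
  · intro i j h
    have := ggLabel_inj m hm (ZMod.val_lt i) (ZMod.val_lt j) h
    exact ZMod.val_injective _ this
  · intro i j h
    simp only at h
    have hi : ((i + 1 : ZMod (4 * m))).val = (i.val + 1) % (4 * m) := by
      rw [ZMod.val_add, ZMod.val_one]
    have hj : ((j + 1 : ZMod (4 * m))).val = (j.val + 1) % (4 * m) := by
      rw [ZMod.val_add, ZMod.val_one]
    rw [hi, hj, ggLabel_diff m hm (ZMod.val_lt i), ggLabel_diff m hm (ZMod.val_lt j)] at h
    have hki := ZMod.val_lt i
    have hkj := ZMod.val_lt j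
    have : i.val = j.val := by
      unfold eeLabel at h; split_ifs at h <;> omega
    exact ZMod.val_injective _ this
  · ext v
    simp only [Set.mem_range, Set.mem_Icc]
    constructor
    · rintro ⟨i, rfl⟩
      have hi : ((i + 1 : ZMod (4 * m))).val = (i.val + 1) % (4 * m) := by
        rw [ZMod.val_add, ZMod.val_one]
      rw [hi, ggLabel_diff m hm (ZMod.val_lt i)]
      have := ZMod.val_lt i
      unfold eeLabel; split_ifs <;> omega
    · rintro ⟨h1, h2⟩
      -- choose k with eeLabel m k = v
      obtain ⟨k, hk, hek⟩ : ∃ k, k < 4 * m ∧ eeLabel m k = v := by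
        rcases Nat.lt_or_ge v (2 * m) with h | h
        · exact ⟨4 * m - 1 - v, by omega, by unfold eeLabel; split_ifs <;> omega⟩
        · rcases Nat.eq_or_lt_of_le h with h' | h'
          · exact ⟨4 * m - 1, by omega, by unfold eeLabel; split_ifs <;> omega⟩
          · exact ⟨4 * m - v, by omega, by unfold eeLabel; split_ifs <;> omega⟩
      refine ⟨(k : ZMod (4 * m)), ?_⟩
      have hkv : ((k : ZMod (4 * m))).val = k := by
        rw [ZMod.val_natCast, Nat.mod_eq_of_lt hk]
      show ((ggLabel m ((k : ZMod (4 * m))).val : ℤ)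
          - (ggLabel m (((k : ZMod (4 * m)) + 1)).val : ℤ)).natAbs = v
      have hi : (((k : ZMod (4 * m)) + 1)).val = (k + 1) % (4 * m) := by
        rw [ZMod.val_add, ZMod.val_one, hkv]
      rw [hi, hkv, ggLabel_diff m hm hk, hek]
end

section
/- If a tree T on p vertices admits a graceful labelling, then the symmetric tree T ⊖ T′ (obtained by taking a disjoint copy T′ of T and joining a vertex x₀ of T to its image x₀′ in T′ by an edge) admits a set-ordered graceful labelling. Concretely, if f is a graceful labelling of T with bipartition (X,Y), then g defined by g(w) = f(w) on X ∪ Y′ and g(w) = f(w) + p on Y ∪ X′ is a set-ordered graceful labelling of T ⊖ T′ with the bipartition (X ∪ Y′, Y ∪ X′). -/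
/-- The induced edge label `|f a − f b|` of an unordered pair. -/
def elabel {V : Type} (f : V → ℕ) : Sym2 V → ℕ :=
  Sym2.lift ⟨fun a b => ((f a : ℤ) - (f b : ℤ)).natAbs, fun a b => by dsimp only; omega⟩

/-- A graceful labelling of a graph `G` with `q` edges. -/
def IsGraceful {V : Type} [Fintype V] (G : SimpleGraph V) (f : V → ℕ) : Prop :=
  Function.Injective f ∧ (∀ v, f v ≤ G.edgeSet.ncard) ∧
  Set.InjOn (elabel f) G.edgeSet ∧
  elabel f '' G.edgeSet = Set.Icc 1 G.edgeSet.ncard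

/-- `X` is one side of a bipartition of `G`. -/
def IsBipartitionOf {V : Type} (G : SimpleGraph V) (X : Set V) : Prop :=
  ∀ u v, G.Adj u v → (u ∈ X ↔ v ∉ X)

/-- A set-ordered graceful labelling with lower part `X`. -/
def IsSetOrderedGraceful {V : Type} [Fintype V] (G : SimpleGraph V) (X : Set V)
    (f : V → ℕ) : Prop :=
  IsGraceful G f ∧ IsBipartitionOf G X ∧ ∀ x ∈ X, ∀ y, y ∉ X → f x < f y

/-- The symmetric tree `T ⊖ T′`: two disjoint copies of `T` (on `V ⊕ V`) joined by the
edge between `x₀` and its image `x₀′`. -/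
def symTree {V : Type} (T : SimpleGraph V) (x0 : V) : SimpleGraph (V ⊕ V) :=
  SimpleGraph.fromRel (fun u v =>
    (∃ a b, u = Sum.inl a ∧ v = Sum.inl b ∧ T.Adj a b) ∨
    (∃ a b, u = Sum.inr a ∧ v = Sum.inr b ∧ T.Adj a b) ∨
    (u = Sum.inl x0 ∧ v = Sum.inr x0))

lemma elabel_mk {V : Type} (f : V → ℕ) (a b : V) :
    elabel f s(a, b) = ((f a : ℤ) - (f b : ℤ)).natAbs := by
  simp [elabel]

lemma symTree_edgeSet {V : Type} (T : SimpleGraph V) (x0 : V) :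
    (symTree T x0).edgeSet =
      (Sym2.map Sum.inl '' T.edgeSet) ∪ (Sym2.map Sum.inr '' T.edgeSet) ∪
        {s(Sum.inl x0, Sum.inr x0)} := by
  ext e
  induction e using Sym2.ind with
  | _ u v =>
    simp only [SimpleGraph.mem_edgeSet, symTree, SimpleGraph.fromRel_adj, Set.mem_union,
      Set.mem_image, Set.mem_singleton_iff]
    constructor
    · rintro ⟨hne, (⟨a,b,rfl,rfl,hab⟩|⟨a,b,rfl,rfl,hab⟩|⟨rfl,rfl⟩)|
        (⟨a,b,rfl,rfl,hab⟩|⟨a,b,rfl,rfl,hab⟩|⟨rfl,rfl⟩)⟩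
      · exact Or.inl (Or.inl ⟨s(a,b), hab, by rw [Sym2.map_pair_eq]⟩)
      · exact Or.inl (Or.inr ⟨s(a,b), hab, by rw [Sym2.map_pair_eq]⟩)
      · exact Or.inr rfl
      · exact Or.inl (Or.inl ⟨s(b,a), hab.symm, by rw [Sym2.map_pair_eq]⟩)
      · exact Or.inl (Or.inr ⟨s(b,a), hab.symm, by rw [Sym2.map_pair_eq]⟩)
      · exact Or.inr Sym2.eq_swap
    · rintro ((⟨e', he', heq⟩ | ⟨e', he', heq⟩) | heq)
      · revert heq
        induction e' using Sym2.ind with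
        | _ a b =>
          intro heq
          rw [Sym2.map_pair_eq, Sym2.eq_iff] at heq
          rw [SimpleGraph.mem_edgeSet] at he'
          rcases heq with ⟨rfl, rfl⟩ | ⟨rfl, rfl⟩
          · exact ⟨by simp [he'.ne], Or.inl (Or.inl ⟨a, b, rfl, rfl, he'⟩)⟩
          · exact ⟨by simp [he'.ne'], Or.inl (Or.inl ⟨b, a, rfl, rfl, he'.symm⟩)⟩
      · revert heq
        induction e' using Sym2.ind with
        | _ a b =>
          intro heq
          rw [Sym2.map_pair_eq, Sym2.eq_iff] at heq
          rw [SimpleGraph.mem_edgeSet] at he'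
          rcases heq with ⟨rfl, rfl⟩ | ⟨rfl, rfl⟩
          · exact ⟨by simp [he'.ne], Or.inl (Or.inr (Or.inl ⟨a, b, rfl, rfl, he'⟩))⟩
          · exact ⟨by simp [he'.ne'], Or.inl (Or.inr (Or.inl ⟨b, a, rfl, rfl, he'.symm⟩))⟩
      · rw [Sym2.eq_iff] at heq
        rcases heq with ⟨rfl, rfl⟩ | ⟨rfl, rfl⟩
        · exact ⟨by simp, Or.inl (Or.inr (Or.inr ⟨rfl, rfl⟩))⟩
        · exact ⟨by simp, Or.inr (Or.inr (Or.inr ⟨rfl, rfl⟩))⟩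

lemma memA {V : Type} (T : SimpleGraph V) (e : Sym2 (V ⊕ V)) :
    e ∈ Sym2.map Sum.inl '' T.edgeSet ↔
      ∃ a b, T.Adj a b ∧ e = s(Sum.inl a, Sum.inl b) := by
  constructor
  · rintro ⟨e', he', rfl⟩
    revert he'
    induction e' using Sym2.ind with
    | _ a b => exact fun he' => ⟨a, b, he', by rw [Sym2.map_pair_eq]⟩
  · rintro ⟨a, b, hab, rfl⟩
    exact ⟨s(a,b), hab, by rw [Sym2.map_pair_eq]⟩

lemma memB {V : Type} (T : SimpleGraph V) (e : Sym2 (V ⊕ V)) :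
    e ∈ Sym2.map Sum.inr '' T.edgeSet ↔
      ∃ a b, T.Adj a b ∧ e = s(Sum.inr a, Sum.inr b) := by
  constructor
  · rintro ⟨e', he', rfl⟩
    revert he'
    induction e' using Sym2.ind with
    | _ a b => exact fun he' => ⟨a, b, he', by rw [Sym2.map_pair_eq]⟩
  · rintro ⟨a, b, hab, rfl⟩
    exact ⟨s(a,b), hab, by rw [Sym2.map_pair_eq]⟩

lemma symTree_ncard {V : Type} [Fintype V] (T : SimpleGraph V) (x0 : V) :
    (symTree T x0).edgeSet.ncard = 2 * T.edgeSet.ncard + 1 := by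
  classical
  rw [symTree_edgeSet]
  have hAB : Disjoint (Sym2.map Sum.inl '' T.edgeSet) (Sym2.map Sum.inr '' T.edgeSet) := by
    rw [Set.disjoint_left]
    intro e heA heB
    rw [memA] at heA; rw [memB] at heB
    obtain ⟨a, b, -, rfl⟩ := heA
    obtain ⟨c, d, -, h⟩ := heB
    rw [Sym2.eq_iff] at h
    rcases h with ⟨h, -⟩ | ⟨h, -⟩ <;> exact absurd h (by simp)
  have hC : Disjoint (Sym2.map Sum.inl '' T.edgeSet ∪ Sym2.map Sum.inr '' T.edgeSet)
      {s(Sum.inl x0, Sum.inr x0)} := by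
    rw [Set.disjoint_right]
    intro e he
    rw [Set.mem_singleton_iff] at he
    subst he
    rintro (h | h)
    · rw [memA] at h
      obtain ⟨a, b, -, h⟩ := h
      rw [Sym2.eq_iff] at h
      rcases h with ⟨-, h⟩ | ⟨-, h⟩ <;> exact absurd h (by simp)
    · rw [memB] at h
      obtain ⟨a, b, -, h⟩ := h
      rw [Sym2.eq_iff] at h
      rcases h with ⟨h, -⟩ | ⟨h, -⟩ <;> exact absurd h (by simp)
  rw [Set.ncard_union_eq hC (by apply Set.toFinite) (by apply Set.toFinite),
    Set.ncard_union_eq hAB (by apply Set.toFinite) (by apply Set.toFinite),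
    Set.ncard_image_of_injective _ (Sym2.map.injective Sum.inl_injective),
    Set.ncard_image_of_injective _ (Sym2.map.injective Sum.inr_injective),
    Set.ncard_singleton]
  ring

/-- if `f` is a graceful labelling of the tree `T` (on `p` vertices, with
bipartition `(X,Y)`), then the labelling `g` which equals `f` on `X ∪ Y′` and `f + p` on
`Y ∪ X′` is a set-ordered graceful labelling of `T ⊖ T′` with bipartition
`(X ∪ Y′, Y ∪ X′)`. -/
theorem symTree_set_ordered_graceful {V : Type} [Fintype V]
    (T : SimpleGraph V) (hT : T.IsTree) (X : Set V) [DecidablePred (· ∈ X)]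
    (hX : IsBipartitionOf T X) (f : V → ℕ) (hf : IsGraceful T f) (x0 : V) :
    IsSetOrderedGraceful (symTree T x0)
      {u : V ⊕ V | ∃ a, (u = Sum.inl a ∧ a ∈ X) ∨ (u = Sum.inr a ∧ a ∉ X)}
      (Sum.elim (fun w => if w ∈ X then f w else f w + Fintype.card V)
                (fun w => if w ∈ X then f w + Fintype.card V else f w)) := by
  classical
  obtain ⟨hfinj, hfle, hfinjOn, hfim⟩ := hf
  set p := Fintype.card V with hp
  have hp1 : 1 ≤ p := Fintype.card_pos_iff.mpr hT.isConnected.nonempty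
  set g : V ⊕ V → ℕ :=
    Sum.elim (fun w => if w ∈ X then f w else f w + p)
             (fun w => if w ∈ X then f w + p else f w) with hg
  set S : Set (V ⊕ V) :=
    {u : V ⊕ V | ∃ a, (u = Sum.inl a ∧ a ∈ X) ∨ (u = Sum.inr a ∧ a ∉ X)} with hS
  have hq : T.edgeSet.ncard = p - 1 := by
    have h1 : T.edgeFinset.card + 1 = p := hT.card_edgeFinset
    have h2 : T.edgeSet.ncard = T.edgeFinset.card := by
      rw [← SimpleGraph.coe_edgeFinset, Set.ncard_coe_finset]
    omega
  have hfb : ∀ v, f v ≤ p - 1 := fun v => hq ▸ hfle v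
  have hcard : (symTree T x0).edgeSet.ncard = 2 * p - 1 := by
    rw [symTree_ncard, hq]; omega
  have hSl : ∀ a : V, (Sum.inl a ∈ S ↔ a ∈ X) := by
    intro a; simp [hS]
  have hSr : ∀ a : V, (Sum.inr a ∈ S ↔ a ∉ X) := by
    intro a; simp [hS]
  have hgl : ∀ a : V, g (Sum.inl a) = if a ∈ X then f a else f a + p := fun a => rfl
  have hgr : ∀ a : V, g (Sum.inr a) = if a ∈ X then f a + p else f a := fun a => rfl
  have K : ∀ a b : V, T.Adj a b →
      1 ≤ elabel f s(a, b) ∧ elabel f s(a, b) ≤ p - 1 ∧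
      ((elabel g s(Sum.inl a, Sum.inl b) = p + elabel f s(a, b) ∧
        elabel g s(Sum.inr a, Sum.inr b) = p - elabel f s(a, b)) ∨
       (elabel g s(Sum.inl a, Sum.inl b) = p - elabel f s(a, b) ∧
        elabel g s(Sum.inr a, Sum.inr b) = p + elabel f s(a, b))) := by
    intro a b hab
    have hne : f a ≠ f b := fun h => hab.ne (hfinj h)
    have h1 := hfb a
    have h2 := hfb b
    have hx := hX a b hab
    rw [elabel_mk, elabel_mk, elabel_mk, hgl, hgl, hgr, hgr]
    by_cases ha : a ∈ X
    · have hb : b ∉ X := hx.mp ha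
      rw [if_pos ha, if_neg hb, if_pos ha, if_neg hb]
      omega
    · have hb : b ∈ X := by by_contra hb; exact ha (hx.mpr hb)
      rw [if_neg ha, if_pos hb, if_neg ha, if_pos hb]
      omega
  have Kc : elabel g s(Sum.inl x0, Sum.inr x0) = p := by
    rw [elabel_mk, hgl, hgr]
    by_cases h : x0 ∈ X <;> simp [h] <;> omega
  have hsurj : ∀ d, 1 ≤ d → d ≤ p - 1 → ∃ a b, T.Adj a b ∧ elabel f s(a, b) = d := by
    intro d h1 h2
    have hd : d ∈ Set.Icc 1 T.edgeSet.ncard := by rw [hq]; exact ⟨h1, h2⟩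
    rw [← hfim] at hd
    obtain ⟨e, he, hde⟩ := hd
    revert he hde
    induction e using Sym2.ind with
    | _ a b => exact fun he hde => ⟨a, b, he, hde⟩
  have hginj : Function.Injective g := by
    rintro (a | a) (b | b) h
    · rw [hgl a, hgl b] at h
      have h1 := hfb a; have h2 := hfb b
      congr 1
      split_ifs at h with ha hb hb
      · exact hfinj h
      · omega
      · omega
      · exact hfinj (by omega)
    · rw [hgl a, hgr b] at h
      have h1 := hfb a; have h2 := hfb b
      exfalso
      split_ifs at h with ha hb hb
      · omega
      · exact hb (hfinj h ▸ ha)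
      · exact ha (hfinj (by omega : f a = f b) ▸ hb)
      · omega
    · rw [hgr a, hgl b] at h
      have h1 := hfb a; have h2 := hfb b
      exfalso
      split_ifs at h with ha hb hb
      · omega
      · exact hb (hfinj (by omega : f a = f b) ▸ ha)
      · exact ha (hfinj h ▸ hb)
      · omega
    · rw [hgr a, hgr b] at h
      have h1 := hfb a; have h2 := hfb b
      congr 1
      split_ifs at h with ha hb hb
      · exact hfinj (by omega)
      · omega
      · omega
      · exact hfinj h
  have hinjOn : Set.InjOn (elabel g) (symTree T x0).edgeSet := by
    rw [symTree_edgeSet]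
    intro e1 he1 e2 he2 h
    rcases he1 with (h1 | h1) | h1 <;> rcases he2 with (h2 | h2) | h2
    · obtain ⟨a, b, hab, rfl⟩ := (memA T e1).mp h1
      obtain ⟨c, d, hcd, rfl⟩ := (memA T e2).mp h2
      obtain ⟨Ka1, Ka2, Ka3⟩ := K a b hab
      obtain ⟨Kb1, Kb2, Kb3⟩ := K c d hcd
      have hd : elabel f s(a, b) = elabel f s(c, d) := by
        rcases Ka3 with ⟨u1, v1⟩ | ⟨u1, v1⟩ <;> rcases Kb3 with ⟨u2, v2⟩ | ⟨u2, v2⟩ <;> omega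
      have h3 : s(a, b) = s(c, d) :=
        hfinjOn (T.mem_edgeSet.mpr hab) (T.mem_edgeSet.mpr hcd) hd
      calc s(Sum.inl a, Sum.inl b) = Sym2.map Sum.inl s(a, b) := (Sym2.map_pair_eq _ _ _).symm
        _ = Sym2.map Sum.inl s(c, d) := by rw [h3]
        _ = s(Sum.inl c, Sum.inl d) := Sym2.map_pair_eq _ _ _
    · obtain ⟨a, b, hab, rfl⟩ := (memA T e1).mp h1
      obtain ⟨c, d, hcd, rfl⟩ := (memB T e2).mp h2
      obtain ⟨Ka1, Ka2, Ka3⟩ := K a b hab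
      obtain ⟨Kb1, Kb2, Kb3⟩ := K c d hcd
      exfalso
      rcases Ka3 with ⟨u1, v1⟩ | ⟨u1, v1⟩ <;> rcases Kb3 with ⟨u2, v2⟩ | ⟨u2, v2⟩ <;>
        first
        | omega
        | (have hd : elabel f s(a, b) = elabel f s(c, d) := by omega
           have h3 : s(a, b) = s(c, d) :=
             hfinjOn (T.mem_edgeSet.mpr hab) (T.mem_edgeSet.mpr hcd) hd
           have h4 : elabel g s(Sum.inl a, Sum.inl b) = elabel g s(Sum.inl c, Sum.inl d) := by
             rw [show s(Sum.inl a, Sum.inl b) = Sym2.map Sum.inl s(a, b) from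
               (Sym2.map_pair_eq _ _ _).symm, h3, Sym2.map_pair_eq]
           omega)
    · obtain ⟨a, b, hab, rfl⟩ := (memA T e1).mp h1
      rw [Set.mem_singleton_iff] at h2
      subst h2
      obtain ⟨Ka1, Ka2, Ka3⟩ := K a b hab
      rw [Kc] at h
      exfalso
      rcases Ka3 with ⟨u1, v1⟩ | ⟨u1, v1⟩ <;> omega
    · obtain ⟨a, b, hab, rfl⟩ := (memB T e1).mp h1
      obtain ⟨c, d, hcd, rfl⟩ := (memA T e2).mp h2
      obtain ⟨Ka1, Ka2, Ka3⟩ := K a b hab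
      obtain ⟨Kb1, Kb2, Kb3⟩ := K c d hcd
      exfalso
      rcases Ka3 with ⟨u1, v1⟩ | ⟨u1, v1⟩ <;> rcases Kb3 with ⟨u2, v2⟩ | ⟨u2, v2⟩ <;>
        first
        | omega
        | (have hd : elabel f s(a, b) = elabel f s(c, d) := by omega
           have h3 : s(a, b) = s(c, d) :=
             hfinjOn (T.mem_edgeSet.mpr hab) (T.mem_edgeSet.mpr hcd) hd
           have h4 : elabel g s(Sum.inl a, Sum.inl b) = elabel g s(Sum.inl c, Sum.inl d) := by
             rw [show s(Sum.inl a, Sum.inl b) = Sym2.map Sum.inl s(a, b) from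
               (Sym2.map_pair_eq _ _ _).symm, h3, Sym2.map_pair_eq]
           omega)
    · obtain ⟨a, b, hab, rfl⟩ := (memB T e1).mp h1
      obtain ⟨c, d, hcd, rfl⟩ := (memB T e2).mp h2
      obtain ⟨Ka1, Ka2, Ka3⟩ := K a b hab
      obtain ⟨Kb1, Kb2, Kb3⟩ := K c d hcd
      have hd : elabel f s(a, b) = elabel f s(c, d) := by
        rcases Ka3 with ⟨u1, v1⟩ | ⟨u1, v1⟩ <;> rcases Kb3 with ⟨u2, v2⟩ | ⟨u2, v2⟩ <;> omega
      have h3 : s(a, b) = s(c, d) :=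
        hfinjOn (T.mem_edgeSet.mpr hab) (T.mem_edgeSet.mpr hcd) hd
      calc s(Sum.inr a, Sum.inr b) = Sym2.map Sum.inr s(a, b) := (Sym2.map_pair_eq _ _ _).symm
        _ = Sym2.map Sum.inr s(c, d) := by rw [h3]
        _ = s(Sum.inr c, Sum.inr d) := Sym2.map_pair_eq _ _ _
    · obtain ⟨a, b, hab, rfl⟩ := (memB T e1).mp h1
      rw [Set.mem_singleton_iff] at h2
      subst h2
      obtain ⟨Ka1, Ka2, Ka3⟩ := K a b hab
      rw [Kc] at h
      exfalso
      rcases Ka3 with ⟨u1, v1⟩ | ⟨u1, v1⟩ <;> omega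
    · obtain ⟨c, d, hcd, rfl⟩ := (memA T e2).mp h2
      rw [Set.mem_singleton_iff] at h1
      subst h1
      obtain ⟨Kb1, Kb2, Kb3⟩ := K c d hcd
      rw [Kc] at h
      exfalso
      rcases Kb3 with ⟨u2, v2⟩ | ⟨u2, v2⟩ <;> omega
    · obtain ⟨c, d, hcd, rfl⟩ := (memB T e2).mp h2
      rw [Set.mem_singleton_iff] at h1
      subst h1
      obtain ⟨Kb1, Kb2, Kb3⟩ := K c d hcd
      rw [Kc] at h
      exfalso
      rcases Kb3 with ⟨u2, v2⟩ | ⟨u2, v2⟩ <;> omega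
    · rw [Set.mem_singleton_iff] at h1 h2
      rw [h1, h2]
  have him : elabel g '' (symTree T x0).edgeSet = Set.Icc 1 (2 * p - 1) := by
    ext k
    simp only [Set.mem_image, Set.mem_Icc]
    constructor
    · rintro ⟨e, he, rfl⟩
      rw [symTree_edgeSet] at he
      rcases he with (h1 | h1) | h1
      · obtain ⟨a, b, hab, rfl⟩ := (memA T e).mp h1
        obtain ⟨Ka1, Ka2, Ka3⟩ := K a b hab
        rcases Ka3 with ⟨u1, -⟩ | ⟨u1, -⟩ <;> omega
      · obtain ⟨a, b, hab, rfl⟩ := (memB T e).mp h1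
        obtain ⟨Ka1, Ka2, Ka3⟩ := K a b hab
        rcases Ka3 with ⟨-, u1⟩ | ⟨-, u1⟩ <;> omega
      · rw [Set.mem_singleton_iff] at h1
        subst h1
        rw [Kc]
        omega
    · rintro ⟨hk1, hk2⟩
      rcases lt_trichotomy k p with hk | hk | hk
      · obtain ⟨a, b, hab, hd⟩ := hsurj (p - k) (by omega) (by omega)
        obtain ⟨Ka1, Ka2, Ka3⟩ := K a b hab
        rcases Ka3 with ⟨-, u1⟩ | ⟨u1, -⟩
        · exact ⟨s(Sum.inr a, Sum.inr b),
            by rw [symTree_edgeSet]; exact Or.inl (Or.inr ((memB T _).mpr ⟨a, b, hab, rfl⟩)),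
            by omega⟩
        · exact ⟨s(Sum.inl a, Sum.inl b),
            by rw [symTree_edgeSet]; exact Or.inl (Or.inl ((memA T _).mpr ⟨a, b, hab, rfl⟩)),
            by omega⟩
      · exact ⟨s(Sum.inl x0, Sum.inr x0),
          by rw [symTree_edgeSet]; exact Or.inr rfl, by rw [Kc]; omega⟩
      · obtain ⟨a, b, hab, hd⟩ := hsurj (k - p) (by omega) (by omega)
        obtain ⟨Ka1, Ka2, Ka3⟩ := K a b hab
        rcases Ka3 with ⟨u1, -⟩ | ⟨-, u1⟩
        · exact ⟨s(Sum.inl a, Sum.inl b),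
            by rw [symTree_edgeSet]; exact Or.inl (Or.inl ((memA T _).mpr ⟨a, b, hab, rfl⟩)),
            by omega⟩
        · exact ⟨s(Sum.inr a, Sum.inr b),
            by rw [symTree_edgeSet]; exact Or.inl (Or.inr ((memB T _).mpr ⟨a, b, hab, rfl⟩)),
            by omega⟩
  have hbip : IsBipartitionOf (symTree T x0) S := by
    intro u v huv
    simp only [symTree, SimpleGraph.fromRel_adj] at huv
    obtain ⟨-, h⟩ := huv
    rcases h with (⟨a,b,rfl,rfl,hab⟩|⟨a,b,rfl,rfl,hab⟩|⟨rfl,rfl⟩)|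
      (⟨a,b,rfl,rfl,hab⟩|⟨a,b,rfl,rfl,hab⟩|⟨rfl,rfl⟩)
    · rw [hSl, hSl]; have := hX a b hab; tauto
    · rw [hSr, hSr]; have := hX a b hab; tauto
    · rw [hSl, hSr]; tauto
    · rw [hSl, hSl]; have := hX a b hab; tauto
    · rw [hSr, hSr]; have := hX a b hab; tauto
    · rw [hSr, hSl]
  refine ⟨⟨hginj, ?_, hinjOn, ?_⟩, hbip, ?_⟩
  · intro v
    rw [hcard]
    rcases v with a | a
    · rw [hgl]; have := hfb a; split_ifs <;> omega
    · rw [hgr]; have := hfb a; split_ifs <;> omega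
  · rw [hcard]; exact him
  · intro x hx y hy
    have hxv : g x ≤ p - 1 := by
      rcases x with a | a
      · rw [hSl] at hx; rw [hgl, if_pos hx]; exact hfb a
      · rw [hSr] at hx; rw [hgr, if_neg hx]; exact hfb a
    have hyv : p ≤ g y := by
      rcases y with a | a
      · rw [hSl] at hy; rw [hgl, if_neg hy]; omega
      · rw [hSr] at hy; rw [hgr, if_pos (not_not.mp hy)]; omega
    omega
end

section
/- A graph G is k-connected if and only if it is v-divided k-connected; that is, the v-divided connectivity κ_d(G) equals the usual vertex connectivity κ(G). -/
/-- `H` (with projection `π`) is the graph obtained from `G` by vertex-splitting every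
vertex of `S` into two vertices (each splitting the neighbourhood): `π` is a graph map,
it induces a bijection between the edge sets, fibers over vertices of `S` have exactly
two elements and all other fibers are singletons. -/
def IsVSplit {V W : Type} [DecidableEq V] [Fintype V] [Fintype W] (G : SimpleGraph V)
    (H : SimpleGraph W) (π : W → V) (S : Finset V) : Prop :=
  (∀ a b, H.Adj a b → G.Adj (π a) (π b)) ∧
  Set.BijOn (Sym2.map π) H.edgeSet G.edgeSet ∧
  (∀ v : V, Set.ncard {w : W | π w = v} = if v ∈ S then 2 else 1)

/-- Splitting some set of `k` vertices of `G` disconnects it, with every component of the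
split graph containing a vertex that did not arise from the split set. -/
def VSplitDisconnects {V : Type} [DecidableEq V] [Fintype V] (G : SimpleGraph V) (k : ℕ) : Prop :=
  ∃ S : Finset V, S.card = k ∧
    ∃ (H : SimpleGraph (V ⊕ Fin k)) (π : V ⊕ Fin k → V),
      IsVSplit G H π S ∧
      (∃ a b : V ⊕ Fin k, ¬ H.Reachable a b) ∧
      (∀ a : V ⊕ Fin k, ∃ b, π b ∉ S ∧ H.Reachable a b)

/-- The v-divided connectivity `κ_d`. -/
noncomputable def vDividedConn {V : Type} [DecidableEq V] [Fintype V] (G : SimpleGraph V) : ℕ :=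
  sInf {k | VSplitDisconnects G k}

/-- The usual vertex connectivity `κ`: the least size of a vertex set whose deletion
leaves two vertices in different components. -/
noncomputable def kappa {V : Type} [Fintype V] (G : SimpleGraph V) : ℕ :=
  sInf {k | ∃ S : Finset V, S.card = k ∧
    ∃ a b : {v : V // v ∉ S},
      ¬ (SimpleGraph.comap (Subtype.val : {v : V // v ∉ S} → V) G).Reachable a b}

/-!
A minimum vertex cut `S` separating `a` from `b` is turned into a splitting: let `A` be the
component of `a` in `G - S`, and split each `s ∈ S` into one copy carrying the edges to `A` and
one carrying all other edges. No edge of the split graph leaves the `A`-side, so `a` and `b` are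
disconnected; minimality of `S` gives each `s` neighbours both in `A` and outside `A ∪ S`, so
every copy of `s` lies in a component with an unsplit vertex. Conversely, vertices outside a split
set `S` have a single copy, so any walk of `G - S` lifts to the split graph, and a splitting that
disconnects gives a vertex cut of the same size.
-/

open SimpleGraph

theorem SimpleGraph.Reachable.mem_of_adj_closed {W : Type} {H : SimpleGraph W} {A : Set W}
    (hA : ∀ x y, H.Adj x y → x ∈ A → y ∈ A) {x y : W} (h : H.Reachable x y) (hx : x ∈ A) :
    y ∈ A := by
  obtain ⟨p⟩ := h
  induction p with
  | nil => exact hx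
  | cons hadj _ ih => exact ih (hA _ _ hadj hx)

section VertexCut

variable {V : Type} (G : SimpleGraph V)

def IsVertexCut (S : Finset V) : Prop :=
  ∃ a b : {v : V // v ∉ S},
    ¬ (SimpleGraph.comap (Subtype.val : {v : V // v ∉ S} → V) G).Reachable a b

/-- With `A` disjoint from `S`, this says that `A` is a union of components of `G - S`. -/
def IsAdjClosedOutside (S : Finset V) (A : Set V) : Prop :=
  ∀ u v, u ∈ A → v ∉ S → G.Adj u v → v ∈ A

variable {G}

theorem isVertexCut_of_isAdjClosedOutside {S : Finset V} {A : Set V}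
    (hA : IsAdjClosedOutside G S A) {a b : V} (ha : a ∈ A) (haS : a ∉ S) (hb : b ∉ A)
    (hbS : b ∉ S) : IsVertexCut G S :=
  ⟨⟨a, haS⟩, ⟨b, hbS⟩, fun hab =>
    hb <| hab.mem_of_adj_closed (A := {x : {v // v ∉ S} | x.1 ∈ A})
      (fun x y hxy hx => hA x y hx y.2 hxy) ha⟩

theorem IsVertexCut.exists_isAdjClosedOutside {S : Finset V} (h : IsVertexCut G S) :
    ∃ A : Set V, (∀ v ∈ A, v ∉ S) ∧ IsAdjClosedOutside G S A ∧
      ∃ a ∈ A, ∃ b ∉ A, b ∉ S := by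
  obtain ⟨a, b, hab⟩ := h
  refine ⟨{v | ∃ hv : v ∉ S, (G.comap Subtype.val).Reachable a ⟨v, hv⟩},
    fun v ⟨hv, _⟩ => hv, ?_, a, ⟨a.2, .rfl⟩, b, fun ⟨_, hb⟩ => hab hb, b.2⟩
  rintro u v ⟨hu, hau⟩ hv huv
  exact ⟨hv, hau.trans (Adj.reachable (G := G.comap Subtype.val) (u := ⟨u, hu⟩) huv)⟩

variable [DecidableEq V]

/-- Otherwise `A` would still be closed after removing `s` from the cut. -/
theorem exists_adj_mem_of_minimal {S : Finset V} {A : Set V}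
    (hmin : ∀ T, IsVertexCut G T → S.card ≤ T.card) (hAS : ∀ v ∈ A, v ∉ S)
    (hA : IsAdjClosedOutside G S A) {a b : V} (ha : a ∈ A) (hb : b ∉ A) (hbS : b ∉ S)
    {s : V} (hs : s ∈ S) : ∃ w ∈ A, G.Adj s w := by
  by_contra! hno
  have hcut : IsVertexCut G (S.erase s) := by
    refine isVertexCut_of_isAdjClosedOutside (A := A) ?_ ha
      (fun h => hAS a ha (Finset.mem_of_mem_erase h)) hb (fun h => hbS (Finset.mem_of_mem_erase h))
    intro u v hu hv huv
    by_cases hvs : v = s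
    · exact absurd hu (hno u · (hvs ▸ huv.symm))
    · exact hA u v hu (fun h => hv (Finset.mem_erase.2 ⟨hvs, h⟩)) huv
  exact (Finset.card_erase_lt_of_mem hs).not_ge (hmin _ hcut)

/-- Otherwise `insert s A` would be closed after removing `s` from the cut. -/
theorem exists_adj_notMem_of_minimal {S : Finset V} {A : Set V}
    (hmin : ∀ T, IsVertexCut G T → S.card ≤ T.card) (hAS : ∀ v ∈ A, v ∉ S)
    (hA : IsAdjClosedOutside G S A) {a b : V} (ha : a ∈ A) (hb : b ∉ A) (hbS : b ∉ S)
    {s : V} (hs : s ∈ S) : ∃ w ∉ A, w ∉ S ∧ G.Adj s w := by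
  by_contra! hno
  have hcut : IsVertexCut G (S.erase s) := by
    refine isVertexCut_of_isAdjClosedOutside (A := insert s A) ?_ (Set.mem_insert_of_mem s ha)
      (fun h => hAS a ha (Finset.mem_of_mem_erase h)) ?_ (fun h => hbS (Finset.mem_of_mem_erase h))
    · rintro u v hu hv huv
      by_cases hvs : v = s
      · exact hvs ▸ Set.mem_insert s A
      have hvS : v ∉ S := fun h => hv (Finset.mem_erase.2 ⟨hvs, h⟩)
      rcases hu with rfl | hu
      · exact Set.mem_insert_of_mem _ (by_contra fun hvA => hno v hvA hvS huv)
      · exact Set.mem_insert_of_mem _ (hA u v hu hvS huv)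
    · rintro (rfl | h)
      exacts [hbS hs, hb h]
  exact (Finset.card_erase_lt_of_mem hs).not_ge (hmin _ hcut)

end VertexCut

namespace IsVSplit

variable {V W : Type} [DecidableEq V] [Fintype V] [Fintype W] {G : SimpleGraph V}
  {H : SimpleGraph W} {π : W → V} {S : Finset V}

theorem eq_of_proj_eq (h : IsVSplit G H π S) {v : V} (hv : v ∉ S) {w w' : W} (hw : π w = v)
    (hw' : π w' = v) : w = w' := by
  have hfib := h.2.2 v
  rw [if_neg hv] at hfib
  exact (Set.ncard_le_one_iff (Set.toFinite _)).1 hfib.le hw hw'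

theorem exists_adj_of_adj (h : IsVSplit G H π S) {x : W} (hx : π x ∉ S) {v : V}
    (hxv : G.Adj (π x) v) : ∃ y, π y = v ∧ H.Adj x y := by
  obtain ⟨e, he, hev⟩ := h.2.1.surjOn (show s(π x, v) ∈ G.edgeSet from hxv)
  induction e using Sym2.ind with
  | _ p q =>
    rw [Sym2.map_mk, Sym2.eq_iff] at hev
    rcases hev with ⟨hp, hq⟩ | ⟨hp, hq⟩
    · exact ⟨q, hq, h.eq_of_proj_eq hx hp rfl ▸ he⟩
    · exact ⟨p, hp, h.eq_of_proj_eq hx hq rfl ▸ (SimpleGraph.mem_edgeSet H).1 he |>.symm⟩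

theorem reachable_of_reachable_comap (h : IsVSplit G H π S) {u v : {v : V // v ∉ S}}
    (huv : (SimpleGraph.comap (Subtype.val : {v : V // v ∉ S} → V) G).Reachable u v)
    {x y : W} (hx : π x = u) (hy : π y = v) : H.Reachable x y := by
  let A : Set {v : V // v ∉ S} := {w | ∃ y, π y = w ∧ H.Reachable x y}
  have hA : ∀ w w', (G.comap Subtype.val).Adj w w' → w ∈ A → w' ∈ A := by
    rintro w w' hww' ⟨z, hz, hxz⟩
    obtain ⟨z', hz', hzz'⟩ := h.exists_adj_of_adj (x := z) (hz ▸ w.2) (hz ▸ hww' : G.Adj (π z) w')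
    exact ⟨z', hz', hxz.trans hzz'.reachable⟩
  obtain ⟨y', hy', hxy'⟩ := huv.mem_of_adj_closed hA ⟨x, hx, .rfl⟩
  exact h.eq_of_proj_eq v.2 hy' hy ▸ hxy'

end IsVSplit

theorem VSplitDisconnects.exists_isVertexCut {V : Type} [DecidableEq V] [Fintype V]
    {G : SimpleGraph V} {k : ℕ} (h : VSplitDisconnects G k) :
    ∃ S : Finset V, S.card = k ∧ IsVertexCut G S := by
  obtain ⟨S, hS, H, π, hsplit, ⟨a, b, hab⟩, hrep⟩ := h
  obtain ⟨a', haS, haa'⟩ := hrep a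
  obtain ⟨b', hbS, hbb'⟩ := hrep b
  exact ⟨S, hS, ⟨π a', haS⟩, ⟨π b', hbS⟩, fun h' =>
    hab (haa'.trans ((hsplit.reachable_of_reachable_comap h' rfl rfl).trans hbb'.symm))⟩

section SplitConstruction

variable {V : Type} [DecidableEq V] (G : SimpleGraph V) (S : Finset V) (A : Set V)

noncomputable def splitProj : V ⊕ Fin S.card → V :=
  Sum.elim id fun i => S.equivFin.symm i

open Classical in
/-- The copy of `u` at which the edge `uv` ends: `s ∈ S` is split into `Sum.inl s`, keeping the
neighbours in `A`, and `Sum.inr (S.equivFin s)`, taking the others. -/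
noncomputable def splitEnd (u v : V) : V ⊕ Fin S.card :=
  if h : u ∈ S ∧ v ∉ A then .inr (S.equivFin ⟨u, h.1⟩) else .inl u

@[simp]
theorem splitProj_splitEnd (u v : V) : splitProj S (splitEnd S A u v) = u := by
  unfold splitProj splitEnd
  split_ifs <;> simp

noncomputable def splitGraph : SimpleGraph (V ⊕ Fin S.card) where
  Adj x y := ∃ u v, G.Adj u v ∧ x = splitEnd S A u v ∧ y = splitEnd S A v u
  symm := ⟨fun _ _ ⟨u, v, huv, hx, hy⟩ => ⟨v, u, huv.symm, hy, hx⟩⟩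
  loopless := ⟨fun x ⟨u, v, huv, hx, hy⟩ =>
    huv.ne (by simpa using congrArg (splitProj S) (hx.symm.trans hy))⟩

variable {G S A}

theorem splitGraph_adj_splitEnd {u v : V} (huv : G.Adj u v) :
    (splitGraph G S A).Adj (splitEnd S A u v) (splitEnd S A v u) :=
  ⟨u, v, huv, rfl, rfl⟩

theorem ncard_splitProj_fiber (v : V) :
    {w | splitProj S w = v}.ncard = if v ∈ S then 2 else 1 := by
  split_ifs with hv
  · have : {w | splitProj S w = v} = {.inl v, .inr (S.equivFin ⟨v, hv⟩)} := by
      ext (u | i)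
      · simp [splitProj]
      · simp only [splitProj, Sum.elim_inr, Set.mem_ofPred_eq, Set.mem_insert_iff,
          Set.mem_singleton_iff, reduceCtorEq, false_or, Sum.inr.injEq]
        constructor
        · rintro rfl
          simp
        · rintro rfl
          simp
    rw [this, Set.ncard_pair (by simp)]
  · have : {w | splitProj S w = v} = {.inl v} := by
      ext (u | i)
      · simp [splitProj]
      · simpa [splitProj] using ne_of_mem_of_not_mem (S.equivFin.symm i).2 hv
    rw [this, Set.ncard_singleton]

variable (G S A) in
theorem isVSplit_splitGraph [Fintype V] : IsVSplit G (splitGraph G S A) (splitProj S) S := by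
  refine ⟨?_, ⟨?_, ?_, ?_⟩, ncard_splitProj_fiber⟩
  · rintro _ _ ⟨u, v, huv, rfl, rfl⟩
    simpa using huv
  · intro e he
    induction e using Sym2.ind with
    | _ x y =>
      obtain ⟨u, v, huv, rfl, rfl⟩ := he
      simpa using huv
  · intro e₁ he₁ e₂ he₂ heq
    induction e₁ using Sym2.ind with
    | _ x₁ y₁ =>
    induction e₂ using Sym2.ind with
    | _ x₂ y₂ =>
      obtain ⟨u₁, v₁, -, rfl, rfl⟩ := he₁
      obtain ⟨u₂, v₂, -, rfl, rfl⟩ := he₂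
      simp only [Sym2.map_mk, splitProj_splitEnd, Sym2.eq_iff] at heq
      rcases heq with ⟨rfl, rfl⟩ | ⟨rfl, rfl⟩
      exacts [rfl, Sym2.eq_swap]
  · intro e he
    induction e using Sym2.ind with
    | _ u v => exact ⟨s(splitEnd S A u v, splitEnd S A v u), splitGraph_adj_splitEnd he, by simp⟩

variable {u v : V}

theorem splitEnd_of_notMem (hu : u ∉ S) : splitEnd S A u v = .inl u :=
  dif_neg fun h => hu h.1

theorem splitEnd_of_mem_right (hv : v ∈ A) : splitEnd S A u v = .inl u :=
  dif_neg fun h => h.2 hv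

theorem splitEnd_of_mem_of_notMem (hu : u ∈ S) (hv : v ∉ A) :
    splitEnd S A u v = .inr (S.equivFin ⟨u, hu⟩) :=
  dif_pos ⟨hu, hv⟩

theorem mem_inl_image_of_splitGraph_adj (hAS : ∀ v ∈ A, v ∉ S)
    (hA : IsAdjClosedOutside G S A) {x y : V ⊕ Fin S.card} (hxy : (splitGraph G S A).Adj x y)
    (hx : x ∈ Sum.inl '' (A ∪ S)) : y ∈ Sum.inl '' (A ∪ S) := by
  obtain ⟨u, v, huv, rfl, rfl⟩ := hxy
  by_cases hu : u ∈ S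
  · by_cases hv : v ∈ A
    · rw [splitEnd_of_notMem (hAS v hv)]
      exact Set.mem_image_of_mem _ (Or.inl hv)
    · simp [splitEnd_of_mem_of_notMem hu hv] at hx
  · obtain ⟨_, huA | huS, hu'⟩ := (splitEnd_of_notMem (A := A) (v := v) hu) ▸ hx
    · by_cases hv : v ∈ S
      · rw [splitEnd_of_mem_right (Sum.inl.inj hu' ▸ huA)]
        exact Set.mem_image_of_mem _ (Or.inr hv)
      · rw [splitEnd_of_notMem hv]
        exact Set.mem_image_of_mem _ (Or.inl (hA u v (Sum.inl.inj hu' ▸ huA) hv huv))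
    · exact absurd (Sum.inl.inj hu' ▸ huS) hu

theorem exists_unsplit_reachable (hAS : ∀ v ∈ A, v ∉ S) (hin : ∀ s ∈ S, ∃ w ∈ A, G.Adj s w)
    (hout : ∀ s ∈ S, ∃ w ∉ A, w ∉ S ∧ G.Adj s w) (x : V ⊕ Fin S.card) :
    ∃ y, splitProj S y ∉ S ∧ (splitGraph G S A).Reachable x y := by
  rcases x with v | i
  · by_cases hv : v ∈ S
    · obtain ⟨w, hwA, hvw⟩ := hin v hv
      refine ⟨.inl w, hAS w hwA, ?_⟩
      have := splitGraph_adj_splitEnd (S := S) (A := A) hvw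
      rw [splitEnd_of_mem_right hwA, splitEnd_of_notMem (hAS w hwA)] at this
      exact this.reachable
    · exact ⟨.inl v, hv, .rfl⟩
  · obtain ⟨w, hwA, hwS, hsw⟩ := hout _ (S.equivFin.symm i).2
    refine ⟨.inl w, hwS, ?_⟩
    have := splitGraph_adj_splitEnd (S := S) (A := A) hsw
    rw [splitEnd_of_mem_of_notMem (S.equivFin.symm i).2 hwA, splitEnd_of_notMem hwS] at this
    simpa using this.reachable

end SplitConstruction

theorem vSplitDisconnects_of_isAdjClosedOutside {V : Type} [DecidableEq V] [Fintype V]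
    {G : SimpleGraph V} {S : Finset V} {A : Set V} (hAS : ∀ v ∈ A, v ∉ S)
    (hA : IsAdjClosedOutside G S A) {a b : V} (ha : a ∈ A) (hb : b ∉ A) (hbS : b ∉ S)
    (hin : ∀ s ∈ S, ∃ w ∈ A, G.Adj s w) (hout : ∀ s ∈ S, ∃ w ∉ A, w ∉ S ∧ G.Adj s w) :
    VSplitDisconnects G S.card := by
  refine ⟨S, rfl, splitGraph G S A, splitProj S, isVSplit_splitGraph G S A,
    ⟨.inl a, .inl b, fun hab => ?_⟩, exists_unsplit_reachable hAS hin hout⟩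
  have := hab.mem_of_adj_closed (fun _ _ => mem_inl_image_of_splitGraph_adj hAS hA)
    (Set.mem_image_of_mem _ (Or.inl ha))
  rcases Sum.inl_injective.mem_set_image.1 this with hbA | hbS'
  exacts [hb hbA, hbS hbS']

theorem IsVertexCut.vSplitDisconnects_of_minimal {V : Type} [DecidableEq V] [Fintype V]
    {G : SimpleGraph V} {S : Finset V} (h : IsVertexCut G S)
    (hmin : ∀ T, IsVertexCut G T → S.card ≤ T.card) : VSplitDisconnects G S.card := by
  obtain ⟨A, hAS, hA, a, ha, b, hb, hbS⟩ := h.exists_isAdjClosedOutside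
  exact vSplitDisconnects_of_isAdjClosedOutside hAS hA ha hb hbS
    (fun _ => exists_adj_mem_of_minimal hmin hAS hA ha hb hbS)
    (fun _ => exists_adj_notMem_of_minimal hmin hAS hA ha hb hbS)

theorem vDividedConn_eq_kappa_general {V : Type} [DecidableEq V] [Fintype V] (G : SimpleGraph V) :
    vDividedConn G = kappa G := by
  set cutSizes := {k | ∃ S : Finset V, S.card = k ∧ IsVertexCut G S}
  have hkappa : kappa G = sInf cutSizes := rfl
  have hsub : {k | VSplitDisconnects G k} ⊆ cutSizes := fun _ hk => hk.exists_isVertexCut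
  rcases cutSizes.eq_empty_or_nonempty with hcut | hcut
  · rw [vDividedConn, hkappa, hcut, Set.subset_eq_empty hsub hcut]
  obtain ⟨S, hS, hcutS⟩ : kappa G ∈ cutSizes := Nat.sInf_mem hcut
  have hsplit : VSplitDisconnects G (kappa G) :=
    hS ▸ hcutS.vSplitDisconnects_of_minimal fun T hT => hS ▸ Nat.sInf_le ⟨T, rfl, hT⟩
  exact le_antisymm (Nat.sInf_le hsplit) (Nat.sInf_le (hsub (Nat.sInf_mem ⟨_, hsplit⟩)))

/-- a graph is k-connected iff it is v-divided k-connected, i.e.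
`κ_d(G) = κ(G)`. -/
theorem vDividedConn_eq_kappa {V : Type} [DecidableEq V] [Fintype V] (G : SimpleGraph V)
    (hG : G.Connected) : vDividedConn G = kappa G :=
  vDividedConn_eq_kappa_general G
end

section
/- Let N be a tree with maximum degree Δ, and let {F_f(G), ⊕} be an every-zero graphic group with |F_f(G)| ≥ Δ + 2. Then N admits a proper total gg-coloring θ such that for every edge uv, the color multisets C′_θ(u) = {θ(u)} ∪ {θ(ux) : x ∈ N(u)} and C′_θ(v) = {θ(v)} ∪ {θ(vy) : y ∈ N(v)} are distinct (adjacent total-distinguishing condition). -/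
/-!
Color the vertices of the tree properly with `{0, 1}` (it is bipartite) and its edges properly with
`Δ` colors, shifted to `{2, …, Δ + 1}`. As `q ≥ Δ + 2` the two palettes stay disjoint in `ZMod q`,
so `θ(u)` is the only vertex color in `C′(u)` and adjacent vertices get different sets. The
gg-condition holds with `k = θ(u) + θ(v) - θ(uv)`.

The `Δ`-edge-coloring comes from rooting the tree at `r`. Label the neighbours of each vertex `u`
injectively by `port u` in an abelian group of order at least `Δ`, and let `c v` be the color of
the edge from `v` to its parent, defined along the depth by
`c v = c u + port u v - port u (parent u)` for `u = parent v`. Then every edge `ux` has color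
`c u + port u x - port u (parent u)` (for `x = parent u` this is `c u`), which is injective in `x`.
-/

namespace SimpleGraph

variable {V A : Type*} {G : SimpleGraph V} {r u v x : V}

lemma exists_adj_dist_add_one (hv : G.dist r v ≠ 0) :
    ∃ u, G.Adj u v ∧ G.dist r u + 1 = G.dist r v := by
  obtain ⟨p, hp⟩ := exists_walk_of_dist_ne_zero hv
  have hnil : ¬p.Nil := fun h => hv (by rw [← hp, h.length_eq_zero])
  have hadj := p.adj_penultimate hnil
  have hle : G.dist r p.penultimate ≤ G.dist r v - 1 := hp ▸ p.length_dropLast ▸ dist_le _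
  refine ⟨p.penultimate, hadj, ?_⟩
  rcases hadj.diff_dist_adj (u := r) with h | h | h <;> omega

lemma IsAcyclic.eq_of_adj_of_dist_add_one (hG : G.IsAcyclic) {u u' : V} (hu : G.Adj u v)
    (hu' : G.Adj u' v) (hd : G.dist r u + 1 = G.dist r v) (hd' : G.dist r u' + 1 = G.dist r v) :
    u = u' := by
  classical
  have hrv : G.Reachable r v := Reachable.of_dist_ne_zero (by omega)
  obtain ⟨p, hp, -⟩ := hrv.exists_path_of_dist
  suffices key : ∀ x, G.Adj x v → G.dist r x + 1 = G.dist r v → x = p.penultimate from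
    (key u hu hd).trans (key u' hu' hd').symm
  intro x hx hdx
  obtain ⟨q, hq, hql⟩ := (hrv.trans hx.symm.reachable).exists_path_of_dist
  have hvq : v ∉ q.support := fun hv => by
    have := (dist_le (q.takeUntil v hv)).trans (q.length_takeUntil_le_length hv)
    omega
  exact hG.eq_penultimate_of_adj_end hp hx.symm
    (hG.mem_support_of_ne_mem_support_of_adj_of_isPath hp hq hx.symm hvq)

open Classical in
noncomputable def parent (G : SimpleGraph V) (r v : V) : V :=
  if h : ∃ u, G.Adj u v ∧ G.dist r u + 1 = G.dist r v then h.choose else v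

lemma adj_parent_and_dist (hv : G.dist r v ≠ 0) :
    G.Adj (G.parent r v) v ∧ G.dist r (G.parent r v) + 1 = G.dist r v := by
  have h := exists_adj_dist_add_one hv
  rw [parent, dif_pos h]
  exact h.choose_spec

lemma IsAcyclic.parent_eq (hG : G.IsAcyclic) (h : G.Adj u v) (hd : G.dist r u + 1 = G.dist r v) :
    G.parent r v = u :=
  have hp := adj_parent_and_dist (r := r) (v := v) (by omega)
  hG.eq_of_adj_of_dist_add_one hp.1 h hp.2 hd

def IsProperEdgeColoring (G : SimpleGraph V) (c : Sym2 V → A) : Prop :=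
  ∀ ⦃u v w⦄, G.Adj u v → G.Adj u w → v ≠ w → c s(u, v) ≠ c s(u, w)

section TreeEdgeColoring

variable [AddCommGroup A] (G) (r) (port : V → V → A)

-- The first argument is fuel: `parentEdgeColor` starts it at the depth of `v`.
noncomputable def parentEdgeColorAux : ℕ → V → A
  | 0, _ => 0
  | k + 1, v =>
    parentEdgeColorAux k (G.parent r v) + port (G.parent r v) v
      - port (G.parent r v) (G.parent r (G.parent r v))

noncomputable def parentEdgeColor (v : V) : A :=
  parentEdgeColorAux G r port (G.dist r v) v

noncomputable def treeEdgeColoring : Sym2 V → A :=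
  Sym2.lift ⟨fun a b =>
    if G.dist r a < G.dist r b then parentEdgeColor G r port b
    else if G.dist r b < G.dist r a then parentEdgeColor G r port a else 0,
    fun a b => by dsimp only; split_ifs <;> first | rfl | omega⟩

variable {G r port}

lemma treeEdgeColoring_mk_of_dist (h : G.dist r x = G.dist r u + 1) :
    treeEdgeColoring G r port s(u, x) = parentEdgeColor G r port x := by
  simp [treeEdgeColoring, h]

lemma IsAcyclic.parentEdgeColor_of_adj (hG : G.IsAcyclic) (h : G.Adj u v)
    (hd : G.dist r u + 1 = G.dist r v) :
    parentEdgeColor G r port v =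
      parentEdgeColor G r port u + port u v - port u (G.parent r u) := by
  rw [parentEdgeColor, ← hd, parentEdgeColorAux, hG.parent_eq h hd, parentEdgeColor]

lemma IsTree.treeEdgeColoring_eq (hG : G.IsTree) (h : G.Adj u x) :
    treeEdgeColoring G r port s(u, x) =
      parentEdgeColor G r port u + port u x - port u (G.parent r u) := by
  rcases hG.dist_eq_dist_add_one_of_adj r h with hd | hd
  · rw [Sym2.eq_swap, treeEdgeColoring_mk_of_dist hd, hG.isAcyclic.parent_eq h.symm hd.symm,
      add_sub_cancel_right]
  · rw [treeEdgeColoring_mk_of_dist hd, hG.isAcyclic.parentEdgeColor_of_adj h hd.symm]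

theorem IsTree.isProperEdgeColoring_treeEdgeColoring (hG : G.IsTree)
    (hport : ∀ u, Set.InjOn (port u) (G.neighborSet u)) :
    IsProperEdgeColoring G (treeEdgeColoring G r port) := by
  intro u v w hv hw hvw
  rw [hG.treeEdgeColoring_eq hv, hG.treeEdgeColoring_eq hw, Ne, sub_left_inj, add_right_inj]
  exact fun h => hvw (hport u hv hw h)

end TreeEdgeColoring

lemma exists_injOn_neighborSet [Fintype V] [DecidableRel G.Adj] [Fintype A] [Nonempty A]
    (h : G.maxDegree ≤ Fintype.card A) :
    ∃ port : V → V → A, ∀ u, Set.InjOn (port u) (G.neighborSet u) := by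
  have hu : ∀ u, ∃ f : V → A, Set.InjOn f (G.neighborSet u) := fun u => by
    have : Fintype.card (G.neighborSet u) ≤ Fintype.card A := by
      rw [card_neighborSet_eq_degree]; exact (G.degree_le_maxDegree u).trans h
    obtain ⟨e⟩ := Function.Embedding.nonempty_of_card_le this
    exact Set.exists_injOn_iff_injective.mpr ⟨e, e.injective⟩
  choose port hport using hu
  exact ⟨port, hport⟩

theorem IsTree.exists_isProperEdgeColoring [Fintype V] [DecidableRel G.Adj] [AddCommGroup A]
    [Fintype A] (hG : G.IsTree) (h : G.maxDegree ≤ Fintype.card A) :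
    ∃ c : Sym2 V → A, IsProperEdgeColoring G c := by
  have : Nonempty A := ⟨0⟩
  obtain ⟨port, hport⟩ := exists_injOn_neighborSet h
  exact ⟨_, hG.isProperEdgeColoring_treeEdgeColoring (r := hG.connected.nonempty.some) hport⟩

theorem IsTree.exists_isProperEdgeColoring_lt_maxDegree [Fintype V] [DecidableRel G.Adj]
    (hG : G.IsTree) :
    ∃ c : Sym2 V → ℕ, IsProperEdgeColoring G c ∧ ∀ ⦃u v⦄, G.Adj u v → c s(u, v) < G.maxDegree := by
  rcases Nat.eq_zero_or_pos G.maxDegree with h0 | hpos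
  · have hbot : ∀ ⦃u v⦄, ¬G.Adj u v := by simp [G.maxDegree_eq_zero_iff.mp h0]
    exact ⟨0, fun u v _ h => (hbot h).elim, fun u v h => (hbot h).elim⟩
  have : NeZero G.maxDegree := ⟨hpos.ne'⟩
  obtain ⟨c, hc⟩ := hG.exists_isProperEdgeColoring (A := ZMod G.maxDegree) (ZMod.card _).ge
  exact ⟨fun e => (c e).val, fun u v w hv hw hvw => ZMod.val_injective _ |>.ne (hc hv hw hvw),
    fun _ _ _ => ZMod.val_lt _⟩

end SimpleGraph

lemma ZMod.natCast_ne_natCast_of_lt {q a b : ℕ} (ha : a < q) (hb : b < q) (hab : a ≠ b) :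
    (a : ZMod q) ≠ b := by
  rwa [Ne, ZMod.natCast_eq_natCast_iff', Nat.mod_eq_of_lt ha, Nat.mod_eq_of_lt hb]

lemma Set.insert_ne_insert_of_notMem {α : Type*} {a b : α} {s t : Set α} (hab : a ≠ b)
    (ha : a ∉ t) : insert a s ≠ insert b t := fun h =>
  (Set.mem_insert_iff.mp (h ▸ Set.mem_insert a s)).elim hab ha

/-- if `N` is a tree and the every-zero graphic group has at least
`Δ(N) + 2` elements (indices in `ZMod q`, operation `a ⊕_k b = a + b − k`), then `N`
admits a proper total gg-coloring which is adjacent total-distinguishing: for every edge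
`uv` the sets `C′(u) = {θ(u)} ∪ {θ(ux) : x ∈ N(u)}` and `C′(v)` differ. -/
theorem tree_adjacent_total_distinguishing_gg_coloring {V : Type} [Fintype V]
    (N : SimpleGraph V) [DecidableRel N.Adj] (hN : N.IsTree)
    (q : ℕ) (hq : N.maxDegree + 2 ≤ q) :
    ∃ (θv : V → ZMod q) (θe : Sym2 V → ZMod q),
      (∀ u v, N.Adj u v → θv u ≠ θv v) ∧
      (∀ u v w, N.Adj u v → N.Adj u w → v ≠ w → θe s(u, v) ≠ θe s(u, w)) ∧
      (∀ u v, N.Adj u v → ∃ k : ZMod q, θe s(u, v) = θv u + θv v - k) ∧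
      (∀ u v, N.Adj u v →
        insert (θv u) {c : ZMod q | ∃ y, N.Adj u y ∧ c = θe s(u, y)} ≠
        insert (θv v) {c : ZMod q | ∃ y, N.Adj v y ∧ c = θe s(v, y)}) := by
  let χ := hN.coloringTwo
  have hχ : ∀ v, (χ v : ℕ) < 2 := fun v => (χ v).isLt
  obtain ⟨c, hc, hc_lt⟩ := hN.exists_isProperEdgeColoring_lt_maxDegree
  have hcq : ∀ ⦃u v⦄, N.Adj u v → c s(u, v) + 2 < q := fun u v h => by
    have := hc_lt h; omega
  have hθv : ∀ u v, N.Adj u v → ((χ u : ℕ) : ZMod q) ≠ (χ v : ℕ) := fun u v h =>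
    ZMod.natCast_ne_natCast_of_lt (by grind) (by grind) (Fin.val_injective.ne (χ.valid h))
  refine ⟨fun v => ((χ v : ℕ) : ZMod q), fun e => ((c e + 2 : ℕ) : ZMod q), hθv, ?_, ?_, ?_⟩
  · exact fun u v w hv hw hvw => ZMod.natCast_ne_natCast_of_lt (hcq hv) (hcq hw)
      (by have := hc hv hw hvw; omega)
  · exact fun u v _ => ⟨_, (sub_sub_cancel _ _).symm⟩
  · refine fun u v h => Set.insert_ne_insert_of_notMem (hθv u v h) ?_
    rintro ⟨y, hy, hval⟩
    exact ZMod.natCast_ne_natCast_of_lt (by grind) (hcq hy) (by grind) hval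
end

section
/- Suppose a connected graph G admits a set-ordered graceful labelling f with bipartition (X,Y), max f(X) < min f(Y). Then there is an orientation of all edges of G yielding a digraph →G that admits a uniformly directed graceful labelling g (all arc values g(→uv) = g(u) − g(v) of the same sign, with |g| a bijection onto {1,...,q}) satisfying f(E(G)) = g(A(→G)). -/
/-- if a connected graph `G` admits a set-ordered graceful labelling `f`,
then there is an orientation `A` of all edges of `G` and a labelling `g` into `{0,…,q}`
which is uniformly directed graceful: all arc values `g(u) − g(v)` are positive, distinct
arcs have distinct values, the set of arc values is exactly `{1,…,q}`, and it coincides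
with the edge label set `f(E(G))`. -/
theorem set_ordered_graceful_gives_uniformly_directed_graceful {V : Type} [Fintype V]
    (G : SimpleGraph V) (hG : G.Connected) (X : Set V) (f : V → ℕ)
    (hf : IsSetOrderedGraceful G X f) :
    ∃ (A : V → V → Prop) (g : V → ℕ),
      (∀ u v, A u v → G.Adj u v) ∧
      (∀ u v, G.Adj u v → (A u v ↔ ¬ A v u)) ∧
      Function.Injective g ∧
      (∀ v, g v ≤ G.edgeSet.ncard) ∧
      (∀ u v, A u v → g v < g u) ∧
      (∀ u v u' v', A u v → A u' v' → g u - g v = g u' - g v' → u = u' ∧ v = v') ∧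
      {n : ℕ | ∃ u v, A u v ∧ g u - g v = n} = Set.Icc 1 G.edgeSet.ncard ∧
      elabel f '' G.edgeSet = {n : ℕ | ∃ u v, A u v ∧ g u - g v = n} := by
  obtain ⟨⟨hinjf, hbound, hinjOn, himg⟩, hbip, hord⟩ := hf
  -- orient each edge from Y to X
  refine ⟨fun u v => G.Adj u v ∧ v ∈ X, f, fun u v h => h.1, ?_, hinjf, hbound, ?_, ?_, ?_, ?_⟩
  · intro u v huv
    have h := hbip u v huv
    constructor
    · rintro ⟨_, hv⟩ ⟨_, hu⟩; exact (h.mp hu) hv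
    · intro hn
      refine ⟨huv, ?_⟩
      by_contra hv
      exact hn ⟨huv.symm, h.mpr hv⟩
  · rintro u v ⟨huv, hv⟩
    exact hord v hv u ((hbip u v huv).mp.mt (fun h => h hv))
  · rintro u v u' v' ⟨huv, hv⟩ ⟨huv', hv'⟩ heq
    have hu : u ∉ X := (hbip u v huv).mp.mt (fun h => h hv)
    have hu' : u' ∉ X := (hbip u' v' huv').mp.mt (fun h => h hv')
    have h1 : f v < f u := hord v hv u hu
    have h2 : f v' < f u' := hord v' hv' u' hu'
    have he1 : elabel f s(u, v) = f u - f v := by simp [elabel]; omega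
    have he2 : elabel f s(u', v') = f u' - f v' := by simp [elabel]; omega
    have := hinjOn (G.mem_edgeSet.mpr huv) (G.mem_edgeSet.mpr huv')
      (by rw [he1, he2, heq])
    rw [Sym2.eq_iff] at this
    rcases this with ⟨rfl, rfl⟩ | ⟨rfl, rfl⟩
    · exact ⟨rfl, rfl⟩
    · exact absurd hv' hu
  all_goals {
    have key : {n : ℕ | ∃ u v, (G.Adj u v ∧ v ∈ X) ∧ f u - f v = n} = elabel f '' G.edgeSet := by
      ext n
      constructor
      · rintro ⟨u, v, ⟨huv, hv⟩, rfl⟩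
        have hu : u ∉ X := (hbip u v huv).mp.mt (fun h => h hv)
        have h1 : f v < f u := hord v hv u hu
        exact ⟨s(u, v), G.mem_edgeSet.mpr huv, by simp [elabel]; omega⟩
      · rintro ⟨e, he, rfl⟩
        induction e using Sym2.ind with
        | _ a b =>
          have hab : G.Adj a b := G.mem_edgeSet.mp he
          by_cases hb : b ∈ X
          · have ha : a ∉ X := (hbip a b hab).mp.mt (fun h => h hb)
            have h1 : f b < f a := hord b hb a ha
            exact ⟨a, b, ⟨hab, hb⟩, by simp [elabel]; omega⟩
          · have ha : a ∈ X := by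
              by_contra ha
              exact hb ((hbip b a hab.symm).mpr ha)
            have h1 : f a < f b := hord a ha b hb
            exact ⟨b, a, ⟨hab.symm, ha⟩, by simp [elabel]; omega⟩
    first
      | (rw [key]; exact himg)
      | exact key.symm
  }
end
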